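/- A collection C of nonempty subsets of N is balanced if and only if for every side payment σ (σ ∈ ℝ^N with σ(N)=0), either σ(S) = 0 for all S ∈ C, or there exist S, T ∈ C with σ(S) > 0 and σ(T) < 0. -/

import Mathlib

open Finset

variable {α : Type*} [Fintype α] [DecidableEq α]

/-- Sum of the payments of the players in coalition `S`. -/
def coalSum (x : α → ℝ) (S : Finset α) : ℝ := ∑ i ∈ S, x i

/-- `B` is a balanced collection on `M` with weights `w`. -/
def IsBalancedOn (M : Finset α) (B : Finset (Finset α)) (w : Finset α → ℝ) : Prop :=
  (∀ S ∈ B, S.Nonempty ∧ S ⊆ M ∧ 0 < w S) ∧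
  (∀ i ∈ M, ∑ S ∈ B.filter (fun S => i ∈ S), w S = 1)

/-- The game `v` is balanced. -/
def BalancedGame (v : Finset α → ℝ) : Prop :=
  ∀ B w, IsBalancedOn (univ : Finset α) B w → ∑ S ∈ B, w S * v S ≤ v univ

/-- `x` is a preimputation of the game `v`. -/
def Preimp (v : Finset α → ℝ) (x : α → ℝ) : Prop := coalSum x univ = v univ

/-- `y` dominates `x` via the coalition `S`. -/
def Dominates (v : Finset α → ℝ) (y x : α → ℝ) (S : Finset α) : Prop :=
  coalSum y S ≤ v S ∧ ∀ i ∈ S, x i < y i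

/-- `x` belongs to the core of the game `v`. -/
def InCore (v : Finset α → ℝ) (x : α → ℝ) : Prop :=
  Preimp v x ∧ ∀ S : Finset α, S.Nonempty → v S ≤ coalSum x S

/-!
Let `V ⊆ ℝ^C` be the space of coalition values `(σ(S))_{S ∈ C}` of side payments `σ`. Balanced
weights `w` satisfy `∑_S w_S σ(S) = σ(N) = 0`, so `V` contains no nonzero vector `≥ 0`.
Conversely, if `V` meets the nonnegative orthant only in `0`, separating `V` from the standard
simplex (Stiemke's lemma) gives `λ > 0` orthogonal to `V`; testing this on `σ = e_i - e_j` shows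
that the coalitions containing any player carry the same total `λ`-weight, and rescaling makes it
`1`. The dichotomy in the statement is the same condition, applied to both `σ` and `-σ`.
-/

theorem exists_pos_dotProduct_eq_zero_of_nonneg_eq_zero {ι : Type*} [Fintype ι]
    (W : Submodule ℝ (ι → ℝ)) (hW : ∀ x ∈ W, 0 ≤ x → x = 0) :
    ∃ l : ι → ℝ, (∀ k, 0 < l k) ∧ ∀ x ∈ W, l ⬝ᵥ x = 0 := by
  classical
  have hdisj : Disjoint (stdSimplex ℝ ι) W := Set.disjoint_left.2 fun x hxΔ hxW => by
    have hsum := hxΔ.2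
    simp [hW x hxW hxΔ.1] at hsum
  obtain ⟨f, u, v, hfΔ, huv, hfW⟩ := geometric_hahn_banach_compact_closed (convex_stdSimplex ℝ ι)
    (isCompact_stdSimplex ℝ ι) W.convex W.closed_of_finiteDimensional hdisj
  have hf : ∀ x ∈ W, f x = 0 := fun x hx => by
    by_contra hne
    simpa [div_mul_cancel₀ _ hne] using hfW _ (W.smul_mem (v / f x) hx)
  have hv : v < 0 := by simpa using hfW 0 W.zero_mem
  have hdot : ∀ x, (fun k => -f (Pi.single k 1)) ⬝ᵥ x = -f x := fun x => by
    conv_rhs => rw [← univ_sum_single x, map_sum]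
    simp only [dotProduct, neg_mul, sum_neg_distrib, neg_inj]
    refine sum_congr rfl fun k _ => ?_
    rw [mul_comm, ← smul_eq_mul, ← map_smul, ← Pi.single_smul', smul_eq_mul, mul_one]
  refine ⟨fun k => -f (Pi.single k 1), fun k => ?_, fun x hx => by rw [hdot, hf x hx, neg_zero]⟩
  linarith [hfΔ _ (single_mem_stdSimplex ℝ k)]

theorem coalSum_neg {N : Type*} (σ : N → ℝ) (S : Finset N) : coalSum (-σ) S = -coalSum σ S :=
  sum_neg_distrib σ

section SidePayment

variable {N : Type*} [Fintype N] [DecidableEq N]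

theorem sum_mul_coalSum (C : Finset (Finset N)) (w : Finset N → ℝ) (σ : N → ℝ) :
    ∑ S ∈ C, w S * coalSum σ S = ∑ i, (∑ S ∈ C.filter (fun S => i ∈ S), w S) * σ i := by
  simp_rw [coalSum, mul_sum, sum_mul, sum_filter]
  rw [sum_comm]
  refine sum_congr rfl fun S _ => ?_
  simp

theorem forall_sidePayment_trichotomy_iff (C : Finset (Finset N)) :
    (∀ σ : N → ℝ, coalSum σ univ = 0 →
      (∀ S ∈ C, coalSum σ S = 0) ∨ (∃ S ∈ C, ∃ T ∈ C, 0 < coalSum σ S ∧ coalSum σ T < 0)) ↔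
    ∀ σ : N → ℝ, coalSum σ univ = 0 →
      (∀ S ∈ C, 0 ≤ coalSum σ S) → ∀ S ∈ C, coalSum σ S = 0 := by
  refine ⟨fun h σ hσ hnonneg => ?_, fun h σ hσ => ?_⟩
  · rcases h σ hσ with hzero | ⟨-, -, T, hT, -, hneg⟩
    · exact hzero
    · exact absurd (hnonneg T hT) hneg.not_ge
  · by_contra! hcon
    obtain ⟨⟨S, hS, hne⟩, hmixed⟩ := hcon
    rcases hne.lt_or_gt with hneg | hpos
    · have hσ' : coalSum (-σ) univ = 0 := by rw [coalSum_neg, hσ, neg_zero]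
      have hnonneg : ∀ T ∈ C, 0 ≤ coalSum (-σ) T := fun T hT => by
        rw [coalSum_neg, neg_nonneg]
        exact not_lt.1 fun hTpos => (hmixed T hT S hS hTpos).not_gt hneg
      have := h (-σ) hσ' hnonneg S hS
      rw [coalSum_neg] at this
      linarith
    · exact hpos.ne' (h σ hσ (fun T hT => hmixed S hS T hT hpos) S hS)

theorem IsBalancedOn.coalSum_eq_zero_of_nonneg {C : Finset (Finset N)} {w : Finset N → ℝ}
    (hw : IsBalancedOn univ C w) {σ : N → ℝ} (hσ : coalSum σ univ = 0)
    (hnonneg : ∀ S ∈ C, 0 ≤ coalSum σ S) : ∀ S ∈ C, coalSum σ S = 0 := by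
  have hsum : ∑ S ∈ C, w S * coalSum σ S = 0 := by
    rw [sum_mul_coalSum]
    simpa [hw.2 _ (mem_univ _), coalSum] using hσ
  have hterms := (sum_eq_zero_iff_of_nonneg fun S hS =>
    mul_nonneg (hw.1 S hS).2.2.le (hnonneg S hS)).1 hsum
  exact fun S hS => (mul_eq_zero.1 (hterms S hS)).resolve_left (hw.1 S hS).2.2.ne'

theorem exists_pos_sum_mul_coalSum_eq_zero (C : Finset (Finset N))
    (h : ∀ σ : N → ℝ, coalSum σ univ = 0 →
      (∀ S ∈ C, 0 ≤ coalSum σ S) → ∀ S ∈ C, coalSum σ S = 0) :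
    ∃ l : Finset N → ℝ, (∀ S ∈ C, 0 < l S) ∧
      ∀ σ : N → ℝ, coalSum σ univ = 0 → ∑ S ∈ C, l S * coalSum σ S = 0 := by
  let coalitionValues : (N → ℝ) →ₗ[ℝ] C → ℝ :=
    LinearMap.pi fun S : C => ∑ i ∈ (S : Finset N), LinearMap.proj i
  let sidePayments : Submodule ℝ (N → ℝ) := LinearMap.ker (∑ i, LinearMap.proj i)
  have hvalues : ∀ σ (S : C), coalitionValues σ S = coalSum σ S := fun σ S => by
    simp [coalitionValues, coalSum]
  have hside : ∀ σ, σ ∈ sidePayments ↔ coalSum σ univ = 0 := fun σ => by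
    simp [sidePayments, coalSum]
  obtain ⟨l, hlpos, hl⟩ := exists_pos_dotProduct_eq_zero_of_nonneg_eq_zero
    (sidePayments.map coalitionValues) <| by
      rintro _ ⟨σ, hσ, rfl⟩ hnonneg
      funext S
      simpa [hvalues] using h σ ((hside σ).1 hσ)
        (fun T hT => by simpa [hvalues] using hnonneg ⟨T, hT⟩) S S.2
  refine ⟨fun S => if hS : S ∈ C then l ⟨S, hS⟩ else 0, fun S hS => by simp [hS, hlpos],
    fun σ hσ => ?_⟩
  have := hl _ ⟨σ, (hside σ).2 hσ, rfl⟩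
  simp only [dotProduct, hvalues] at this
  rw [← sum_coe_sort C, ← this]
  simp

theorem sum_filter_mem_eq_of_sum_mul_coalSum_eq_zero (C : Finset (Finset N)) (l : Finset N → ℝ)
    (hl : ∀ σ : N → ℝ, coalSum σ univ = 0 → ∑ S ∈ C, l S * coalSum σ S = 0) (i j : N) :
    ∑ S ∈ C.filter (fun S => i ∈ S), l S = ∑ S ∈ C.filter (fun S => j ∈ S), l S := by
  have h := hl (Pi.single i 1 - Pi.single j 1) (by simp [coalSum, sum_sub_distrib])
  simpa [sum_mul_coalSum, mul_sub, sum_sub_distrib, sub_eq_zero, Pi.single_apply] using h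

theorem exists_isBalancedOn_of_sum_mul_coalSum_eq_zero (C : Finset (Finset N))
    (hCne : C.Nonempty) (hC : ∀ S ∈ C, S.Nonempty) (l : Finset N → ℝ)
    (hlpos : ∀ S ∈ C, 0 < l S)
    (hl : ∀ σ : N → ℝ, coalSum σ univ = 0 → ∑ S ∈ C, l S * coalSum σ S = 0) :
    ∃ w, IsBalancedOn univ C w := by
  obtain ⟨S₀, hS₀⟩ := hCne
  obtain ⟨i₀, hi₀⟩ := hC S₀ hS₀
  set c := ∑ S ∈ C.filter (fun S => i₀ ∈ S), l S
  have hc : 0 < c := sum_pos' (fun S hS => (hlpos S (mem_filter.1 hS).1).le)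
    ⟨S₀, mem_filter.2 ⟨hS₀, hi₀⟩, hlpos S₀ hS₀⟩
  refine ⟨fun S => l S / c, fun S hS => ⟨hC S hS, subset_univ S, div_pos (hlpos S hS) hc⟩,
    fun i _ => ?_⟩
  rw [← sum_div, sum_filter_mem_eq_of_sum_mul_coalSum_eq_zero C l hl i i₀, div_self hc.ne']

end SidePayment

theorem stmt_7 (C : Finset (Finset α)) (hCne : C.Nonempty) (hC : ∀ S ∈ C, S.Nonempty) :
    (∃ w : Finset α → ℝ, IsBalancedOn (univ : Finset α) C w) ↔
    ∀ σ : α → ℝ, coalSum σ univ = 0 →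
      (∀ S ∈ C, coalSum σ S = 0) ∨
      (∃ S ∈ C, ∃ T ∈ C, 0 < coalSum σ S ∧ coalSum σ T < 0) := by
  rw [forall_sidePayment_trichotomy_iff]
  refine ⟨fun ⟨w, hw⟩ σ hσ => hw.coalSum_eq_zero_of_nonneg hσ, fun h => ?_⟩
  obtain ⟨l, hlpos, hl⟩ := exists_pos_sum_mul_coalSum_eq_zero C h
  exact exists_isBalancedOn_of_sum_mul_coalSum_eq_zero C hCne hC l hlpos hl
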